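/- arXiv:1809.01250 — 8 statements merged into one kernel-verified Lean document; each statement's English description precedes it below -/
import Mathlib

section
/- For all integers n ≥ 1 and m ≥ 1, the polynomial (1 + t)(1 + t + t^2) divides P(t) = 1 + t + t^{3m+2} + t^{2n+3m-1} + t^{2n+6m} + t^{2n+6m+1} in ℤ[t]. -/
open Polynomial

private noncomputable def Dpoly : ℤ[X] := (1 + X) * (1 + X + X ^ 2)

private noncomputable def Ppoly (n m : ℕ) : ℤ[X] :=
  1 + X + X ^ (3 * m + 2) + X ^ (2 * n + 3 * m - 1)
    + X ^ (2 * n + 6 * m) + X ^ (2 * n + 6 * m + 1)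

private lemma dvd6 : Dpoly ∣ (X ^ 6 - 1 : ℤ[X]) :=
  ⟨(X - 1) * (X ^ 2 - X + 1), by unfold Dpoly; ring⟩

private lemma dvd12 : Dpoly ∣ (X ^ 12 - 1 : ℤ[X]) :=
  ⟨(X ^ 6 + 1) * (X - 1) * (X ^ 2 - X + 1), by unfold Dpoly; ring⟩

private lemma stepn (n m : ℕ) (hn : 1 ≤ n) (hm : 1 ≤ m) (h : Dpoly ∣ Ppoly n m) :
    Dpoly ∣ Ppoly (n + 3) m := by
  have key : Ppoly (n + 3) m = Ppoly n m +
      (X ^ 6 - 1) * (X ^ (2 * n + 3 * m - 1) + X ^ (2 * n + 6 * m) + X ^ (2 * n + 6 * m + 1)) := by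
    unfold Ppoly
    have e1 : 2 * (n + 3) + 3 * m - 1 = 2 * n + 3 * m - 1 + 6 := by omega
    have e2 : 2 * (n + 3) + 6 * m = 2 * n + 6 * m + 6 := by omega
    have e3 : 2 * (n + 3) + 6 * m + 1 = 2 * n + 6 * m + 1 + 6 := by omega
    rw [e1, e2, pow_add, pow_add]
    ring
  rw [key]
  exact dvd_add h (dvd6.mul_right _)

private lemma stepm (n m : ℕ) (hn : 1 ≤ n) (hm : 1 ≤ m) (h : Dpoly ∣ Ppoly n m) :
    Dpoly ∣ Ppoly n (m + 2) := by
  have key : Ppoly n (m + 2) = Ppoly n m +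
      (X ^ 6 - 1) * (X ^ (3 * m + 2) + X ^ (2 * n + 3 * m - 1)) +
      (X ^ 12 - 1) * (X ^ (2 * n + 6 * m) + X ^ (2 * n + 6 * m + 1)) := by
    unfold Ppoly
    have e1 : 3 * (m + 2) + 2 = 3 * m + 2 + 6 := by omega
    have e2 : 2 * n + 3 * (m + 2) - 1 = 2 * n + 3 * m - 1 + 6 := by omega
    have e3 : 2 * n + 6 * (m + 2) = 2 * n + 6 * m + 12 := by omega
    have e4 : 2 * n + 6 * (m + 2) + 1 = 2 * n + 6 * m + 1 + 12 := by omega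
    rw [e1, e2, e3, pow_add, pow_add, pow_add]
    ring
  rw [key]
  exact dvd_add (dvd_add h (dvd6.mul_right _)) (dvd12.mul_right _)

private lemma base11 : Dpoly ∣ Ppoly 1 1 :=
  ⟨1 - X ^ 1 + X ^ 3 - X ^ 5 + X ^ 6, by unfold Dpoly Ppoly; norm_num; ring⟩

private lemma base12 : Dpoly ∣ Ppoly 1 2 :=
  ⟨1 - X ^ 1 + X ^ 3 - X ^ 4 + X ^ 6 - X ^ 8 + X ^ 9 - X ^ 11 + X ^ 12, by
    unfold Dpoly Ppoly; norm_num; ring⟩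

private lemma base21 : Dpoly ∣ Ppoly 2 1 :=
  ⟨1 - X ^ 1 + X ^ 3 - X ^ 4 + X ^ 5 - X ^ 7 + X ^ 8, by unfold Dpoly Ppoly; norm_num; ring⟩

private lemma base22 : Dpoly ∣ Ppoly 2 2 :=
  ⟨1 - X ^ 1 + X ^ 3 - X ^ 4 + X ^ 6 - X ^ 7 + X ^ 8 - X ^ 10 + X ^ 11 - X ^ 13 + X ^ 14, by
    unfold Dpoly Ppoly; norm_num; ring⟩

private lemma base31 : Dpoly ∣ Ppoly 3 1 :=
  ⟨1 - X ^ 1 + X ^ 3 - X ^ 4 + X ^ 5 - X ^ 6 + X ^ 7 - X ^ 9 + X ^ 10, by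
    unfold Dpoly Ppoly; norm_num; ring⟩

private lemma base32 : Dpoly ∣ Ppoly 3 2 :=
  ⟨1 - X ^ 1 + X ^ 3 - X ^ 4 + X ^ 6 - X ^ 7 + X ^ 8 - X ^ 9 + X ^ 10 - X ^ 12 + X ^ 13 - X ^ 15 + X ^ 16, by
    unfold Dpoly Ppoly; norm_num; ring⟩

private lemma baseM (n : ℕ) (hn : 1 ≤ n) (hn3 : n ≤ 3) : ∀ m, 1 ≤ m → Dpoly ∣ Ppoly n m := by
  intro m
  induction m using Nat.strong_induction_on with
  | _ m ih =>
    intro hm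
    rcases Nat.lt_or_ge m 3 with h3 | h3
    · interval_cases n <;> interval_cases m
      · exact base11
      · exact base12
      · exact base21
      · exact base22
      · exact base31
      · exact base32
    · obtain ⟨k, rfl⟩ : ∃ k, m = k + 2 := ⟨m - 2, by omega⟩
      exact stepm n k hn (by omega) (ih k (by omega) (by omega))

private lemma mainlem : ∀ n, 1 ≤ n → ∀ m, 1 ≤ m → Dpoly ∣ Ppoly n m := by
  intro n
  induction n using Nat.strong_induction_on with
  | _ n ih =>
    intro hn m hm
    rcases Nat.lt_or_ge n 4 with h4 | h4
    · exact baseM n hn (by omega) m hm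
    · obtain ⟨k, rfl⟩ : ∃ k, n = k + 3 := ⟨n - 3, by omega⟩
      exact stepn k m (by omega) hm (ih k (by omega) (by omega) m hm)

theorem stmt_1 (n m : ℕ) (hn : 1 ≤ n) (hm : 1 ≤ m) :
    ((1 + X) * (1 + X + X ^ 2) : ℤ[X]) ∣
      (1 + X + X ^ (3 * m + 2) + X ^ (2 * n + 3 * m - 1)
        + X ^ (2 * n + 6 * m) + X ^ (2 * n + 6 * m + 1)) := by
  exact mainlem n hn m hm
end

section
/- For integers n ≥ 2 and m ≥ 1, let θ₁ = (π/2)/(n + 3m/2 − 3/4) and g(θ) = 2cos(θ/2)cos((n+3m)θ) + cos((n−3/2)θ). Then g(θ₁) < 0. -/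
open Real

theorem stmt_5 (n m : ℕ) (hn : 2 ≤ n) (hm : 1 ≤ m)
    (g : ℝ → ℝ)
    (hg : ∀ θ : ℝ, g θ = 2 * Real.cos (θ / 2) * Real.cos (((n : ℝ) + 3 * m) * θ)
        + Real.cos (((n : ℝ) - 3 / 2) * θ)) :
    g ((π / 2) / ((n : ℝ) + 3 * m / 2 - 3 / 4)) < 0 := by
  have hn' : (2:ℝ) ≤ n := by exact_mod_cast hn
  have hm' : (1:ℝ) ≤ m := by exact_mod_cast hm
  have hpi := Real.pi_pos
  set D : ℝ := (n:ℝ) + 3 * m / 2 - 3 / 4 with hDdef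
  clear_value D
  have hD : (11/4 : ℝ) ≤ D := by rw [hDdef]; linarith
  have hDpos : (0:ℝ) < D := by linarith
  set θ : ℝ := (π / 2) / D with hθdef
  clear_value θ
  have hθpos : 0 < θ := by
    rw [hθdef]; exact div_pos (by linarith) hDpos
  have hθeq : D * θ = π / 2 := by
    rw [hθdef]; field_simp
  set c : ℝ := 3 * m / 2 + 3 / 4 with hcdef
  clear_value c
  have hcpos : 0 < c := by rw [hcdef]; linarith
  have hcD : c < D := by rw [hcdef, hDdef]; linarith
  have hcθ : 0 < c * θ := mul_pos hcpos hθpos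
  have hcθ2 : c * θ < π / 2 := by
    rw [← hθeq]
    exact mul_lt_mul_of_pos_right hcD hθpos
  have hsin : 0 < Real.sin (c * θ) :=
    Real.sin_pos_of_pos_of_lt_pi hcθ (by linarith)
  have hθsmall : θ < 2 * π / 3 := by
    nlinarith [mul_le_mul_of_nonneg_right hD (le_of_lt hθpos)]
  have hcos : (1/2 : ℝ) < Real.cos (θ / 2) := by
    have := Real.cos_lt_cos_of_nonneg_of_le_pi (x := θ/2) (y := π/3)
      (by linarith) (by linarith) (by linarith)
    rw [Real.cos_pi_div_three] at this
    linarith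
  have h1 : ((n:ℝ) + 3 * m) * θ = π / 2 + c * θ := by
    rw [← hθeq, hcdef, hDdef]; ring
  have h2 : ((n:ℝ) - 3 / 2) * θ = π / 2 - c * θ := by
    rw [← hθeq, hcdef, hDdef]; ring
  rw [hg, h1, h2, Real.cos_pi_div_two_sub]
  have h3 : Real.cos (π / 2 + c * θ) = - Real.sin (c * θ) := by
    rw [Real.cos_add, Real.cos_pi_div_two, Real.sin_pi_div_two]; ring
  rw [h3]
  nlinarith
end

section
/- For integers n ≥ 2 and m ≥ 1, the function g(θ) = 2cos(θ/2)cos((n+3m)θ) + cos((n−3/2)θ) satisfies g'(θ) < 0 for all θ in the open interval ((π/2)/(n+3m), (π/2)/(n+3m/2−3/4)). -/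
/-! With `A = n + 3m` and `B = n - 3/2`, the upper end of the interval is `π / (A + B)`, and
`-g'(θ) = sin ((A + 1/2) θ) + (2A - 1) cos (θ/2) sin (Aθ) + B sin (Bθ)`.
On the interval `Aθ`, `Bθ`, `(A + 1/2)θ` lie in `(0, π)` and `θ/2` in `(0, π/2)`, so the first two
terms are nonnegative and the last one is positive. -/

open Real

theorem hasDerivAt_two_mul_cos_half_mul_cos_add_cos (A B θ : ℝ) :
    HasDerivAt (fun θ : ℝ => 2 * cos (θ / 2) * cos (A * θ) + cos (B * θ))
      (-(sin (θ / 2) * cos (A * θ) + 2 * A * cos (θ / 2) * sin (A * θ) + B * sin (B * θ))) θ := by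
  have hhalf : HasDerivAt (fun θ : ℝ => cos (θ / 2)) (-sin (θ / 2) * (1 / 2)) θ :=
    ((hasDerivAt_id θ).div_const 2).cos
  have hcos (c : ℝ) : HasDerivAt (fun θ : ℝ => cos (c * θ)) (-sin (c * θ) * (c * 1)) θ :=
    ((hasDerivAt_id θ).const_mul c).cos
  exact (((hhalf.const_mul 2).mul (hcos A)).add (hcos B)).congr_deriv (by ring)

theorem sin_half_mul_cos_add_eq (A B θ : ℝ) :
    sin (θ / 2) * cos (A * θ) + 2 * A * cos (θ / 2) * sin (A * θ) + B * sin (B * θ)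
      = sin ((A + 1 / 2) * θ) + (2 * A - 1) * cos (θ / 2) * sin (A * θ) + B * sin (B * θ) := by
  rw [show (A + 1 / 2) * θ = A * θ + θ / 2 by ring, sin_add]
  ring

theorem sin_half_mul_cos_add_pos {A B θ : ℝ} (hA : 1 / 2 ≤ A) (hB : 1 / 2 ≤ B)
    (hθ : θ ∈ Set.Ioo (π / 2 / A) (π / (A + B))) :
    0 < sin (θ / 2) * cos (A * θ) + 2 * A * cos (θ / 2) * sin (A * θ) + B * sin (B * θ) := by
  obtain ⟨hlo, hhi⟩ := hθ
  rw [div_lt_iff₀ (by linarith)] at hlo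
  rw [lt_div_iff₀ (by linarith)] at hhi
  have hθ_pos : 0 < θ := by nlinarith [pi_pos]
  have hsin_A : 0 < sin (A * θ) := sin_pos_of_pos_of_lt_pi (by positivity) (by nlinarith)
  have hsin_B : 0 < sin (B * θ) := sin_pos_of_pos_of_lt_pi (by positivity) (by nlinarith)
  have hcos_half : 0 < cos (θ / 2) := cos_pos_of_mem_Ioo ⟨by linarith [pi_pos], by nlinarith⟩
  have hsin_sum : 0 ≤ sin ((A + 1 / 2) * θ) :=
    sin_nonneg_of_nonneg_of_le_pi (by positivity) (by nlinarith)
  rw [sin_half_mul_cos_add_eq]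
  have hmiddle : 0 ≤ (2 * A - 1) * cos (θ / 2) * sin (A * θ) :=
    mul_nonneg (mul_nonneg (by linarith) hcos_half.le) hsin_A.le
  have hlast : 0 < B * sin (B * θ) := mul_pos (by linarith) hsin_B
  linarith

theorem stmt_7_general (n m : ℕ) (hn : 2 ≤ n) :
    ∀ θ ∈ Set.Ioo ((π / 2) / ((n : ℝ) + 3 * m)) ((π / 2) / ((n : ℝ) + 3 * m / 2 - 3 / 4)),
      deriv (fun θ : ℝ => 2 * Real.cos (θ / 2) * Real.cos (((n : ℝ) + 3 * m) * θ)
        + Real.cos (((n : ℝ) - 3 / 2) * θ)) θ < 0 := by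
  intro θ hθ
  have hn' : (2 : ℝ) ≤ n := by exact_mod_cast hn
  have hupper : (π / 2) / ((n : ℝ) + 3 * m / 2 - 3 / 4) = π / ((n + 3 * m) + (n - 3 / 2)) := by
    rw [div_div]; congr 1; ring
  rw [hupper] at hθ
  rw [(hasDerivAt_two_mul_cos_half_mul_cos_add_cos _ _ θ).deriv, neg_lt_zero]
  exact sin_half_mul_cos_add_pos (by linarith [(Nat.cast_nonneg m : (0 : ℝ) ≤ m)]) (by linarith) hθ

theorem stmt_7 (n m : ℕ) (hn : 2 ≤ n) (hm : 1 ≤ m) :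
    ∀ θ ∈ Set.Ioo ((π / 2) / ((n : ℝ) + 3 * m)) ((π / 2) / ((n : ℝ) + 3 * m / 2 - 3 / 4)),
      deriv (fun θ : ℝ => 2 * Real.cos (θ / 2) * Real.cos (((n : ℝ) + 3 * m) * θ)
        + Real.cos (((n : ℝ) - 3 / 2) * θ)) θ < 0 :=
  stmt_7_general n m hn
end

section
/- For all integers n ≥ 1 and m ≥ 1, the function g(θ) = 2cos(θ/2)cos((n+3m)θ) + cos((n−3/2)θ) has a root θ* in the open interval (0, 2π/3) at which g'(θ*) ≠ 0. -/
set_option maxHeartbeats 1000000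

open Real

theorem stmt_9 (n m : ℕ) (hn : 1 ≤ n) (hm : 1 ≤ m) :
    ∃ θ ∈ Set.Ioo (0 : ℝ) (2 * π / 3),
      (2 * Real.cos (θ / 2) * Real.cos (((n : ℝ) + 3 * m) * θ)
          + Real.cos (((n : ℝ) - 3 / 2) * θ) = 0) ∧
      deriv (fun θ : ℝ => 2 * Real.cos (θ / 2) * Real.cos (((n : ℝ) + 3 * m) * θ)
          + Real.cos (((n : ℝ) - 3 / 2) * θ)) θ ≠ 0 := by
  have hn1 : (1:ℝ) ≤ (n:ℝ) := by exact_mod_cast hn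
  have hm1 : (1:ℝ) ≤ (m:ℝ) := by exact_mod_cast hm
  set A : ℝ := (n:ℝ) + 3*m with hA
  set B : ℝ := (n:ℝ) - 3/2 with hB
  have hA4 : (4:ℝ) ≤ A := by simp only [hA]; linarith
  have hA0 : (0:ℝ) < A := by linarith
  have hπ := Real.pi_pos
  set f : ℝ → ℝ := fun θ => 2 * Real.cos (θ/2) * Real.cos (A*θ) + Real.cos (B*θ) with hf
  have hcont : Continuous f := by fun_prop
  -- value at π/A
  have e1 : A * (π/A) = π := by field_simp
  have e1' : (π/A)/2 = π/(2*A) := by rw [div_div, mul_comm]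
  have hfa : f (π/A) < 0 := by
    have h2 : (1:ℝ)/2 < Real.cos (π/(2*A)) := by
      have h3 : π/(2*A) < π/3 := by
        rw [div_lt_div_iff₀ (by linarith) (by norm_num)]
        nlinarith
      have := Real.cos_lt_cos_of_nonneg_of_le_pi (x := π/(2*A)) (y := π/3)
        (by positivity) (by linarith) h3
      rwa [Real.cos_pi_div_three] at this
    have h3 : Real.cos (B*(π/A)) ≤ 1 := Real.cos_le_one _
    simp only [hf, e1, e1', Real.cos_pi]
    linarith
  -- value at 2π/A
  have e2 : A * (2*π/A) = 2*π := by field_simp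
  have e2' : (2*π/A)/2 = π/A := by ring
  have hfb : 0 < f (2*π/A) := by
    have h2 : Real.sqrt 2 / 2 ≤ Real.cos (π/A) := by
      have h3 : π/A ≤ π/4 := by
        rw [div_le_div_iff₀ (by linarith) (by norm_num)]
        nlinarith
      have := Real.cos_le_cos_of_nonneg_of_le_pi (x := π/A) (y := π/4)
        (by positivity) (by linarith) h3
      rwa [Real.cos_pi_div_four] at this
    have h3 : -1 ≤ Real.cos (B*(2*π/A)) := Real.neg_one_le_cos _
    have hs2 : (1.4:ℝ) < Real.sqrt 2 := by
      nlinarith [Real.sq_sqrt (by norm_num : (2:ℝ) ≥ 0), Real.sqrt_nonneg 2]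
    simp only [hf, e2, e2', Real.cos_two_pi]
    linarith
  -- IVT
  have hab : π/A ≤ 2*π/A := by
    gcongr
    linarith
  obtain ⟨θ, hθmem, hθ0⟩ := intermediate_value_Ioo hab hcont.continuousOn ⟨hfa, hfb⟩
  obtain ⟨hθl, hθr⟩ := hθmem
  have hθpos : 0 < θ := lt_trans (by positivity) hθl
  have hθhalf : θ < π/2 := by
    have h : 2*π/A ≤ π/2 := by
      rw [div_le_div_iff₀ hA0 (by norm_num)]
      nlinarith
    linarith
  -- bounds at θ
  have hcos2 : Real.sqrt 2 / 2 ≤ Real.cos (θ/2) := by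
    have := Real.cos_le_cos_of_nonneg_of_le_pi (x := θ/2) (y := π/4)
      (by linarith) (by linarith) (by linarith)
    rwa [Real.cos_pi_div_four] at this
  have hAθ1 : π < A*θ := by
    have := (div_lt_iff₀ hA0).mp hθl
    linarith [mul_comm θ A]
  have hAθ2 : A*θ < 2*π := by
    have := (lt_div_iff₀ hA0).mp hθr
    linarith [mul_comm θ A]
  have hsinA0 : Real.sin (A*θ) ≤ 0 := by
    have h := Real.sin_add_pi (A*θ - π)
    rw [sub_add_cancel] at h
    have h2 : 0 ≤ Real.sin (A*θ - π) :=
      Real.sin_nonneg_of_nonneg_of_le_pi (by linarith) (by linarith)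
    linarith
  have hs2 : Real.sqrt 2 ^ 2 = 2 := Real.sq_sqrt (by norm_num)
  have hs2' : (0:ℝ) ≤ Real.sqrt 2 := Real.sqrt_nonneg 2
  have hsq : Real.cos (A*θ) ^ 2 ≤ 1/2 := by
    have h1 : 2 * Real.cos (θ/2) * Real.cos (A*θ) = - Real.cos (B*θ) := by
      have := hθ0
      simp only [hf] at this
      linarith
    have h2 : Real.cos (B*θ) ^ 2 ≤ 1 := Real.cos_sq_le_one _
    have h4 : 2 ≤ (2 * Real.cos (θ/2))^2 := by nlinarith [hs2, hs2']
    have h5 : (2 * Real.cos (θ/2))^2 * Real.cos (A*θ)^2 = Real.cos (B*θ)^2 := by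
      rw [← mul_pow, h1, neg_sq]
    nlinarith [h4, h5, h2, sq_nonneg (Real.cos (A*θ))]
  have hsinA : Real.sin (A*θ) ≤ -(Real.sqrt 2 / 2) := by
    have h := Real.sin_sq_add_cos_sq (A*θ)
    nlinarith [hsinA0, hsq, hs2, hs2']
  -- the derivative
  have hd : HasDerivAt f (2 * (-Real.sin (θ/2) * (1/2)) * Real.cos (A*θ)
      + 2 * Real.cos (θ/2) * (-Real.sin (A*θ) * A) + (-Real.sin (B*θ) * B)) θ := by
    have h1 : HasDerivAt (fun x : ℝ => x/2) (1/2) θ := (hasDerivAt_id θ).div_const 2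
    have h2 : HasDerivAt (fun x : ℝ => A*x) A θ := by
      simpa using (hasDerivAt_id θ).const_mul A
    have h3 : HasDerivAt (fun x : ℝ => B*x) B θ := by
      simpa using (hasDerivAt_id θ).const_mul B
    exact ((h1.cos.const_mul 2).mul h2.cos).add h3.cos
  refine ⟨θ, ⟨hθpos, by nlinarith⟩, by simpa [hf] using hθ0, ?_⟩
  have hdd := hd.deriv
  simp only [hf] at hdd
  rw [hdd]
  have hprod : 1/2 ≤ Real.cos (θ/2) * (-Real.sin (A*θ)) := by
    nlinarith [mul_nonneg (by linarith : (0:ℝ) ≤ Real.cos (θ/2) - Real.sqrt 2/2)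
      (by linarith : (0:ℝ) ≤ -Real.sin (A*θ) - Real.sqrt 2/2)]
  have key : A ≤ 2 * Real.cos (θ/2) * (-Real.sin (A*θ) * A) := by
    nlinarith [mul_nonneg (by linarith : (0:ℝ) ≤ Real.cos (θ/2) * (-Real.sin (A*θ)) - 1/2)
      (le_of_lt hA0)]
  have t1 : -1 ≤ 2 * (-Real.sin (θ/2) * (1/2)) * Real.cos (A*θ) := by
    nlinarith [Real.neg_one_le_sin (θ/2), Real.sin_le_one (θ/2),
      Real.neg_one_le_cos (A*θ), Real.cos_le_one (A*θ)]
  have t3 : -(n:ℝ) ≤ -Real.sin (B*θ) * B := by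
    have hB1 : -(n:ℝ) ≤ B := by simp only [hB]; linarith
    have hB2 : B ≤ (n:ℝ) := by simp only [hB]; linarith
    have h1 : |Real.sin (B*θ)| ≤ 1 := Real.abs_sin_le_one _
    have h2 : |B| ≤ (n:ℝ) := abs_le.mpr ⟨hB1, hB2⟩
    have h4 : |(-Real.sin (B*θ)) * B| ≤ (n:ℝ) := by
      rw [abs_mul, abs_neg]
      calc |Real.sin (B*θ)| * |B| ≤ 1 * (n:ℝ) :=
            mul_le_mul h1 h2 (abs_nonneg _) zero_le_one
        _ = (n:ℝ) := one_mul _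
    linarith [neg_abs_le ((-Real.sin (B*θ)) * B), h4]
  clear_value A B f
  have : (0:ℝ) < 2 * (-Real.sin (θ/2) * (1/2)) * Real.cos (A*θ)
      + 2 * Real.cos (θ/2) * (-Real.sin (A*θ) * A) + (-Real.sin (B*θ) * B) := by
    have hAn : (n:ℝ) + 3 ≤ A := by simp only [hA]; linarith
    linarith
  exact ne_of_gt this
end

section
/- For all integers n ≥ 1 and m ≥ 1, the polynomial P(t) = 1 + t + t^{3m+2} + t^{2n+3m-1} + t^{2n+6m} + t^{2n+6m+1} has a root z on the unit circle in ℂ with z ∉ {−1} ∪ {primitive cube roots of unity} such that z is a simple root of P (i.e., P(z) = 0 and P'(z) ≠ 0). -/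
/-!
With `E = 2n + 6m`, `a = 3m + 2`, `b = 2n + 3m - 1` we have `a + b = E + 1`, so pairing the
exponents `k` and `E + 1 - k` gives, for `z = exp (2 i t)` and `K = b - a`,
`P z = 2 exp (i (E + 1) t) · (2 cos t cos (E t) + cos (K t))`.
The real factor is `3` at `t = 0` and negative at `E t = 3π/4`, so it has a zero `s` in between.
On that range its derivative `-2 (sin t cos Et + E cos t sin Et) - K sin Kt` is negative, because
`sin x + cos x ≥ 0` for `0 ≤ x ≤ 3π/4` and `|K t| ≤ π`; hence `exp (2 i s)` is a simple root of `P`.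
Since `s < π/4` its real part is positive, which rules out `-1` and the primitive cube roots.
-/

open Polynomial Real

open Complex in
theorem IsPrimitiveRoot.re_eq_neg_half_of_three {z : ℂ} (h : IsPrimitiveRoot z 3) :
    z.re = -1 / 2 := by
  have hsum : z ^ 2 + z + 1 = 0 := by
    simpa [Finset.sum_range_succ, add_comm, add_left_comm, add_assoc] using
      h.geom_sum_eq_zero (by norm_num)
  have hre := congrArg re hsum
  have him := congrArg im hsum
  simp only [pow_two, add_re, mul_re, add_im, mul_im, one_re, one_im, zero_re, zero_im] at hre him
  have : z.im * (2 * z.re + 1) = 0 := by linarith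
  rcases mul_eq_zero.1 this with hy | hx
  · rw [hy] at hre
    nlinarith [sq_nonneg (z.re + 1 / 2)]
  · linarith

theorem Real.sin_add_cos_nonneg {x : ℝ} (h0 : 0 ≤ x) (h1 : x ≤ 3 * π / 4) :
    0 ≤ sin x + cos x := by
  have hsin : 0 ≤ sin (x + π / 4) := sin_nonneg_of_nonneg_of_le_pi (by positivity) (by linarith)
  rw [sin_add, cos_pi_div_four, sin_pi_div_four] at hsin
  nlinarith [Real.sqrt_pos.2 (show (0 : ℝ) < 2 by norm_num)]

theorem Real.mul_sin_mul_nonneg {K t : ℝ} (ht : 0 ≤ t) (h : |K| * t ≤ π) :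
    0 ≤ K * sin (K * t) := by
  rcases le_total 0 K with hK | hK
  · rw [abs_of_nonneg hK] at h
    exact mul_nonneg hK (sin_nonneg_of_nonneg_of_le_pi (by positivity) h)
  · rw [abs_of_nonpos hK] at h
    exact mul_nonneg_of_nonpos_of_nonpos hK
      (sin_nonpos_of_nonpos_of_neg_pi_le (mul_nonpos_of_nonpos_of_nonneg hK ht) (by linarith))

noncomputable def trigFactor (E K t : ℝ) : ℝ := 2 * cos t * cos (E * t) + cos (K * t)

section trigFactor

variable {E K : ℝ}

theorem hasDerivAt_trigFactor (E K t : ℝ) :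
    HasDerivAt (trigFactor E K)
      (-2 * (sin t * cos (E * t) + E * cos t * sin (E * t)) - K * sin (K * t)) t := by
  have hE := ((hasDerivAt_id t).const_mul E).cos
  have hK := ((hasDerivAt_id t).const_mul K).cos
  exact ((((hasDerivAt_cos t).const_mul 2).mul hE).add hK).congr_deriv (by simp only [id]; ring)

theorem trigFactor_lt_zero (hE : 3 < E) : trigFactor E K (3 * π / (4 * E)) < 0 := by
  have hE0 : 0 < E := by linarith
  have hEt : E * (3 * π / (4 * E)) = π - π / 4 := by field_simp; ring
  have hlt : 3 * π / (4 * E) < π / 4 := by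
    rw [div_lt_div_iff₀ (by positivity) (by norm_num)]
    nlinarith [pi_pos]
  have hcos : cos (π / 4) < cos (3 * π / (4 * E)) :=
    cos_lt_cos_of_nonneg_of_le_pi (by positivity) (by linarith [pi_pos]) hlt
  rw [cos_pi_div_four] at hcos
  have h2 : √2 * √2 = 2 := Real.mul_self_sqrt (by norm_num)
  simp only [trigFactor, hEt, cos_pi_sub, cos_pi_div_four]
  nlinarith [cos_le_one (K * (3 * π / (4 * E))), Real.sqrt_pos.2 (show (0 : ℝ) < 2 by norm_num)]

theorem deriv_trigFactor_neg (hE : 4 ≤ E) (hK : |K| ≤ E + 1) {t : ℝ} (ht : 0 < t)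
    (hEt : E * t ≤ 3 * π / 4) : deriv (trigFactor E K) t < 0 := by
  rw [(hasDerivAt_trigFactor E K t).deriv]
  have ht' : t < π / 3 := by nlinarith [pi_pos]
  have hcos : 1 / 2 < cos t := by
    rw [← cos_pi_div_three]
    exact cos_lt_cos_of_nonneg_of_le_pi ht.le (by linarith) ht'
  have hsin : 0 < sin t := sin_pos_of_pos_of_lt_pi ht (by linarith)
  have hsinE : 0 < sin (E * t) := sin_pos_of_pos_of_lt_pi (by positivity) (by linarith [pi_pos])
  have hsc : 0 ≤ sin (E * t) + cos (E * t) := sin_add_cos_nonneg (by positivity) hEt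
  have hKt : 0 ≤ K * sin (K * t) := mul_sin_mul_nonneg ht.le (by nlinarith [abs_nonneg K])
  have hdom : sin t < E * cos t := by nlinarith [sin_le_one t]
  nlinarith [mul_pos hsinE (sub_pos.2 hdom), mul_nonneg hsin.le hsc]

theorem exists_trigFactor_root (hE : 4 ≤ E) (hK : |K| ≤ E + 1) :
    ∃ s ∈ Set.Ioo 0 (π / 4), trigFactor E K s = 0 ∧ deriv (trigFactor E K) s < 0 := by
  set t₀ := 3 * π / (4 * E)
  have ht₀ : 0 < t₀ := by positivity
  have hEt₀ : E * t₀ = 3 * π / 4 := by simp only [t₀]; field_simp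
  have hcont : ContinuousOn (trigFactor E K) (Set.Icc 0 t₀) := by
    unfold trigFactor
    fun_prop
  have hzero : (0 : ℝ) ∈ Set.Ioo (trigFactor E K t₀) (trigFactor E K 0) :=
    ⟨trigFactor_lt_zero (by linarith), by norm_num [trigFactor]⟩
  obtain ⟨s, ⟨hs0, hst₀⟩, hs⟩ := intermediate_value_Ioo' ht₀.le hcont hzero
  refine ⟨s, ⟨hs0, ?_⟩, hs, deriv_trigFactor_neg hE hK hs0 (by nlinarith)⟩
  have : t₀ ≤ 3 * π / 16 := div_le_div_of_nonneg_left (by positivity) (by norm_num) (by linarith)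
  linarith [pi_pos]

end trigFactor

theorem Polynomial.eval_derivative_ne_zero_of_eval_comp_eq_mul {P : ℂ[X]} {γ g h : ℝ → ℂ}
    {s : ℝ} {h' : ℂ} (hP : ∀ t, P.eval (γ t) = g t * h t) (hγ : DifferentiableAt ℝ γ s)
    (hg : DifferentiableAt ℝ g s) (hh : HasDerivAt h h' s) (hgs : g s ≠ 0) (hhs : h s = 0)
    (hh' : h' ≠ 0) : (derivative P).eval (γ s) ≠ 0 := by
  have hlhs := (P.hasDerivAt (γ s)).comp s hγ.hasDerivAt
  have hrhs := hg.hasDerivAt.mul hh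
  rw [hhs, mul_zero, zero_add] at hrhs
  have := hlhs.unique (hrhs.congr_of_eventuallyEq (Filter.Eventually.of_forall hP))
  exact left_ne_zero_of_mul (this ▸ mul_ne_zero hgs hh')

open Complex in
theorem eval_exp_eq_trigFactor (a b E : ℕ) (hab : a + b = E + 1) (t : ℝ) :
    (1 + X + X ^ a + X ^ b + X ^ E + X ^ (E + 1) : ℂ[X]).eval (cexp (2 * t * I)) =
      2 * cexp ((E + 1) * t * I) * trigFactor E (b - a) t := by
  set w := cexp (t * I) with hw_def
  have hw : w ≠ 0 := exp_ne_zero _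
  have hcos : ∀ x : ℝ, (Real.cos x : ℂ) = (cexp (x * I) + (cexp (x * I))⁻¹) / 2 := fun x => by
    rw [ofReal_cos, Complex.cos, ← Complex.exp_neg]
    ring_nf
  have hmul : ∀ k : ℕ, cexp (k * t * I) = w ^ k := fun k => by
    rw [mul_assoc, Complex.exp_nat_mul]
  have h2 : cexp (2 * t * I) = w ^ 2 := mod_cast hmul 2
  have hE1 : cexp ((E + 1) * t * I) = w ^ E * w := by
    rw [← pow_succ, ← hmul]
    push_cast
    rfl
  have hK : cexp ((b - a) * t * I) = w ^ b / w ^ a := by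
    rw [sub_mul, sub_mul, Complex.exp_sub, hmul, hmul]
  have hE : w ^ E = w ^ a * w ^ b / w := by
    rw [eq_div_iff hw, ← pow_succ, ← pow_add, hab]
  have hsq : ∀ k : ℕ, (w ^ 2) ^ k = (w ^ k) ^ 2 := fun k => pow_right_comm w 2 k
  simp only [trigFactor, eval_add, eval_pow, eval_X, eval_one, ofReal_add, ofReal_mul,
    ofReal_sub, ofReal_natCast, ofReal_ofNat, hcos, h2, hE1, hmul, hK, ← hw_def, hsq]
  rw [pow_succ w E, hE]
  field_simp
  ring

open Complex in
theorem exists_simple_root_of_add_eq (a b E : ℕ) (hab : a + b = E + 1) (hE : 4 ≤ E) :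
    ∃ z : ℂ, ‖z‖ = 1 ∧ 0 < z.re ∧
      (1 + X + X ^ a + X ^ b + X ^ E + X ^ (E + 1) : ℂ[X]).eval z = 0 ∧
      (derivative (1 + X + X ^ a + X ^ b + X ^ E + X ^ (E + 1) : ℂ[X])).eval z ≠ 0 := by
  have hK : |(b : ℝ) - a| ≤ E + 1 := by
    have : (a : ℝ) + b = E + 1 := mod_cast hab
    rw [abs_le]
    constructor <;> linarith [a.cast_nonneg (α := ℝ), b.cast_nonneg (α := ℝ)]
  obtain ⟨s, ⟨hs0, hs⟩, hroot, hderiv⟩ := exists_trigFactor_root (by exact_mod_cast hE) hK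
  have hz : cexp (2 * s * I) = cexp ((2 * s : ℝ) * I) := by push_cast; rfl
  refine ⟨cexp (2 * s * I), ?_, ?_, ?_, ?_⟩
  · rw [hz, norm_exp_ofReal_mul_I]
  · rw [hz, exp_ofReal_mul_I_re]
    exact cos_pos_of_mem_Ioo ⟨by linarith [pi_pos], by linarith⟩
  · rw [eval_exp_eq_trigFactor a b E hab, hroot, ofReal_zero, mul_zero]
  · refine eval_derivative_ne_zero_of_eval_comp_eq_mul (eval_exp_eq_trigFactor a b E hab)
      (by fun_prop) (by fun_prop) (hasDerivAt_trigFactor E _ s).ofReal_comp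
      (mul_ne_zero two_ne_zero (exp_ne_zero _)) (by rw [hroot, ofReal_zero]) ?_
    rw [← (hasDerivAt_trigFactor E _ s).deriv]
    exact_mod_cast hderiv.ne

theorem stmt_10_general (n m : ℕ) (hm : 1 ≤ m) :
    ∃ z : ℂ, ‖z‖ = 1 ∧ z ≠ -1 ∧ ¬ IsPrimitiveRoot z 3 ∧
      ((1 + X + X ^ (3 * m + 2) + X ^ (2 * n + 3 * m - 1)
          + X ^ (2 * n + 6 * m) + X ^ (2 * n + 6 * m + 1) : ℂ[X]).eval z = 0) ∧
      (derivative (1 + X + X ^ (3 * m + 2) + X ^ (2 * n + 3 * m - 1)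
          + X ^ (2 * n + 6 * m) + X ^ (2 * n + 6 * m + 1) : ℂ[X])).eval z ≠ 0 := by
  obtain ⟨z, hz, hre, hroot, hsimple⟩ := exists_simple_root_of_add_eq
    (3 * m + 2) (2 * n + 3 * m - 1) (2 * n + 6 * m) (by omega) (by omega)
  refine ⟨z, hz, ?_, fun h => ?_, hroot, hsimple⟩
  · rintro rfl
    norm_num at hre
  · linarith [h.re_eq_neg_half_of_three]

theorem stmt_10 (n m : ℕ) (hn : 1 ≤ n) (hm : 1 ≤ m) :
    ∃ z : ℂ, ‖z‖ = 1 ∧ z ≠ -1 ∧ ¬ IsPrimitiveRoot z 3 ∧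
      ((1 + X + X ^ (3 * m + 2) + X ^ (2 * n + 3 * m - 1)
          + X ^ (2 * n + 6 * m) + X ^ (2 * n + 6 * m + 1) : ℂ[X]).eval z = 0) ∧
      (derivative (1 + X + X ^ (3 * m + 2) + X ^ (2 * n + 3 * m - 1)
          + X ^ (2 * n + 6 * m) + X ^ (2 * n + 6 * m + 1) : ℂ[X])).eval z ≠ 0 :=
  stmt_10_general n m hm
end

section
/- Let a, w be order-preserving bijections of ℝ and m ≥ 1 an integer. Suppose for all x ∈ ℝ: x < a(x), x < w(x), and ((aw)^m ∘ a)(x) < (w ∘ (aw)^m)(x). Then for every integer k ≥ 1 and every x ∈ ℝ, ((aw)^m ∘ a^k)(x) < (w^k ∘ (aw)^m)(x) and (a^k ∘ (wa)^m)(x) < ((wa)^m ∘ w^k)(x). -/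
theorem stmt_12 (a w : ℝ ≃o ℝ) (m : ℕ) (hm : 1 ≤ m)
    (ha : ∀ x : ℝ, x < a x) (hw : ∀ x : ℝ, x < w x)
    (h1 : ∀ x : ℝ, (fun y => a (w y))^[m] (a x) < w ((fun y => a (w y))^[m] x)) :
    ∀ k : ℕ, 1 ≤ k → ∀ x : ℝ,
      (fun y => a (w y))^[m] ((a : ℝ → ℝ)^[k] x)
          < (w : ℝ → ℝ)^[k] ((fun y => a (w y))^[m] x) ∧
      (a : ℝ → ℝ)^[k] ((fun y => w (a y))^[m] x)
          < (fun y => w (a y))^[m] ((w : ℝ → ℝ)^[k] x) := by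
  set f : ℝ → ℝ := fun y => a (w y) with hf
  set g : ℝ → ℝ := fun y => w (a y) with hg
  have hsa : Function.Semiconj (a : ℝ → ℝ) g f := fun x => rfl
  have hsw : Function.Semiconj (w : ℝ → ℝ) f g := fun x => rfl
  have hsam := hsa.iterate_right m
  have hswm := hsw.iterate_right m
  have hma : StrictMono (a : ℝ → ℝ) := a.strictMono
  have hmw : StrictMono (w : ℝ → ℝ) := w.strictMono
  intro k hk
  induction k, hk using Nat.le_induction with
  | base =>
    intro x
    constructor
    · simpa using h1 x
    · simp only [Function.iterate_one]
      rw [hsam x, ← hswm x]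
      exact h1 x
  | succ n hn ih =>
    intro x
    constructor
    · calc f^[m] ((a : ℝ → ℝ)^[n + 1] x)
          = f^[m] ((a : ℝ → ℝ)^[n] (a x)) := by rw [Function.iterate_succ_apply]
        _ < (w : ℝ → ℝ)^[n] (f^[m] (a x)) := (ih (a x)).1
        _ < (w : ℝ → ℝ)^[n] (w (f^[m] x)) := (hmw.iterate n) (h1 x)
        _ = (w : ℝ → ℝ)^[n + 1] (f^[m] x) := (Function.iterate_succ_apply _ _ _).symm
    · calc (a : ℝ → ℝ)^[n + 1] (g^[m] x)
          = a ((a : ℝ → ℝ)^[n] (g^[m] x)) := Function.iterate_succ_apply' _ _ _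
        _ < a (g^[m] ((w : ℝ → ℝ)^[n] x)) := hma (ih x).2
        _ = f^[m] (a ((w : ℝ → ℝ)^[n] x)) := hsam _
        _ < w (f^[m] ((w : ℝ → ℝ)^[n] x)) := h1 _
        _ = g^[m] (w ((w : ℝ → ℝ)^[n] x)) := hswm _
        _ = g^[m] ((w : ℝ → ℝ)^[n + 1] x) := by rw [Function.iterate_succ_apply']
end

section
/- Let a, w be order-preserving bijections of ℝ, m, n ≥ 1 integers, satisfying the relation w^n (aw)^m a^{-1} (aw)^{-m} = (wa)^{-m} a (wa)^m w^{n-1} as bijections of ℝ, and suppose x < a(x) for all x ∈ ℝ. Then for all x ∈ ℝ, ((aw)^m ∘ a)(x) < (w ∘ (aw)^m)(x), and consequently x < w(x) for all x ∈ ℝ. -/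
private lemma oiso_pow_apply (e : ℝ ≃o ℝ) (j : ℕ) : (⇑e)^[j] = ⇑(e^j) := by
  induction j with
  | zero => simp [RelIso.coe_one]
  | succ i ih =>
    rw [Function.iterate_succ, ih, pow_succ]
    rfl

/-- The relation `w^n (aw)^m a⁻¹ (aw)^{-m} = (wa)^{-m} a (wa)^m w^{n-1}` of the knot group
of the `(n-2)`-twisted `(3,3m+2)`-torus knot, acting on `ℝ`, together with `x < a x`,
implies `(aw)^m (a x) < w ((aw)^m x)` and hence `x < w x`. -/
theorem stmt_13 (a w : ℝ ≃o ℝ) (m n : ℕ) (hm : 1 ≤ m) (hn : 1 ≤ n)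
    (hrel : ∀ x : ℝ,
      (w : ℝ → ℝ)^[n] ((fun y => a (w y))^[m] (a.symm ((fun y => w.symm (a.symm y))^[m] x)))
        = (fun y => a.symm (w.symm y))^[m]
            (a ((fun y => w (a y))^[m] ((w : ℝ → ℝ)^[n - 1] x))))
    (ha : ∀ x : ℝ, x < a x) :
    (∀ x : ℝ, (fun y => a (w y))^[m] (a x) < w ((fun y => a (w y))^[m] x)) ∧
    (∀ x : ℝ, x < w x) := by
  obtain ⟨k, rfl⟩ : ∃ k, n = k + 1 := ⟨n - 1, (Nat.succ_pred_eq_of_pos hn).symm⟩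
  set P : ℝ ≃o ℝ := (a * w) ^ m with hP
  set Q : ℝ ≃o ℝ := (w * a) ^ m with hQ
  -- translate the pointwise relation into a group equation
  have hrel' : w ^ (k + 1) * P * a⁻¹ * P⁻¹ = Q⁻¹ * a * Q * w ^ k := by
    ext x
    have H := hrel x
    have e1 : (fun y => a (w y)) = ⇑(a * w) := rfl
    have e2 : (fun y => w (a y)) = ⇑(w * a) := rfl
    have e3 : (fun y => w.symm (a.symm y)) = ⇑((a * w)⁻¹) := rfl
    have e4 : (fun y => a.symm (w.symm y)) = ⇑((w * a)⁻¹) := rfl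
    have e5 : ⇑a.symm = ⇑(a⁻¹) := rfl
    rw [e1, e2, e3, e4, e5, oiso_pow_apply, oiso_pow_apply, oiso_pow_apply,
      oiso_pow_apply, oiso_pow_apply, oiso_pow_apply, Nat.add_sub_cancel] at H
    simpa only [RelIso.mul_apply, inv_pow, ← hP, ← hQ] using H
  set g : ℝ ≃o ℝ := Q * w ^ (k + 1) * P with hg
  have key : P * a * g⁻¹ * a * g = w * P := by
    have h2 : Q⁻¹ * a * Q = w ^ (k + 1) * P * a⁻¹ * P⁻¹ * (w ^ k)⁻¹ := by
      rw [hrel']; group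
    calc P * a * g⁻¹ * a * g
        = P * a * P⁻¹ * (w ^ (k + 1))⁻¹ * (Q⁻¹ * a * Q) * (w ^ (k + 1) * P) := by
          rw [hg]; group
      _ = P * a * P⁻¹ * (w ^ (k + 1))⁻¹ *
            (w ^ (k + 1) * P * a⁻¹ * P⁻¹ * (w ^ k)⁻¹) * (w ^ (k + 1) * P) := by rw [h2]
      _ = w * P := by group
  -- g⁻¹ a g moves points to the right
  have hgag : ∀ x : ℝ, x < (g⁻¹ : ℝ ≃o ℝ) (a (g x)) := by
    intro x
    have h1 : g x < a (g x) := ha _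
    have h2 := (g⁻¹ : ℝ ≃o ℝ).strictMono h1
    rwa [show (g⁻¹ : ℝ ≃o ℝ) (g x) = x from g.symm_apply_apply x] at h2
  have first : ∀ x : ℝ, P (a x) < w (P x) := by
    intro x
    have h3 : P (a x) < P (a ((g⁻¹ : ℝ ≃o ℝ) (a (g x)))) :=
      P.strictMono (a.strictMono (hgag x))
    have h4 : P (a ((g⁻¹ : ℝ ≃o ℝ) (a (g x)))) = w (P x) := by
      have := congrArg (fun (e : ℝ ≃o ℝ) => e x) key
      simpa only [RelIso.mul_apply] using this
    rwa [h4] at h3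
  have hPco : (fun y => a (w y))^[m] = ⇑P := by
    rw [show (fun y => a (w y)) = ⇑(a * w) from rfl, oiso_pow_apply]
  constructor
  · intro x
    rw [hPco]
    exact first x
  · intro y
    have hx := first (P.symm y)
    have h5 : P (P.symm y) = y := P.apply_symm_apply y
    have h6 : y < P (a (P.symm y)) := by
      conv_lhs => rw [← h5]
      exact P.strictMono (ha _)
    rw [h5] at hx
    exact h6.trans hx
end

section
/- Let a, w be order-preserving bijections of ℝ and m, n ≥ 1 integers. Suppose for all x ∈ ℝ: x < a(x), x < w(x), ((aw)^m ∘ a^k)(x) < (w^k ∘ (aw)^m)(x) for all k ≥ 1, (a^k ∘ (wa)^m)(x) < ((wa)^m ∘ w^k)(x) for all k ≥ 1, and a(x) ≥ (a^{-n} (wa)^m w^n (aw)^{m-1} a w^n (aw)^m a^{-(n+3m)})(x). Then w(x) < a(x) for all x ∈ ℝ. -/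
private lemma aux_aw (a w : ℝ ≃o ℝ) (hw : ∀ x : ℝ, x < w x) (k : ℕ) (x : ℝ) :
    (⇑a)^[k] x ≤ (fun y => a (w y))^[k] x := by
  induction k with
  | zero => simp
  | succ k ih =>
    rw [Function.iterate_succ_apply', Function.iterate_succ_apply']
    exact le_trans (a.monotone ih) (a.monotone (hw _).le)

private lemma aux_wa (a w : ℝ ≃o ℝ) (hw : ∀ x : ℝ, x < w x) (k : ℕ) (x : ℝ) :
    (⇑a)^[k] x ≤ (fun y => w (a y))^[k] x := by
  induction k with
  | zero => simp
  | succ k ih =>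
    rw [Function.iterate_succ_apply', Function.iterate_succ_apply']
    exact le_trans (a.monotone ih) (hw _).le

/-- Key lemma: if `a x ≥ (a^{-n} (wa)^m w^n (aw)^{m-1} a w^n (aw)^m a^{-(n+3m)}) x`
for all `x`, together with the inequalities of the induction lemma, then `w x < a x`. -/
theorem stmt_14 (a w : ℝ ≃o ℝ) (m n : ℕ) (hm : 1 ≤ m) (hn : 1 ≤ n)
    (ha : ∀ x : ℝ, x < a x) (hw : ∀ x : ℝ, x < w x)
    (h1 : ∀ k : ℕ, 1 ≤ k → ∀ x : ℝ,
      (fun y => a (w y))^[m] ((⇑a)^[k] x) < (⇑w)^[k] ((fun y => a (w y))^[m] x))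
    (h2 : ∀ k : ℕ, 1 ≤ k → ∀ x : ℝ,
      (⇑a)^[k] ((fun y => w (a y))^[m] x) < (fun y => w (a y))^[m] ((⇑w)^[k] x))
    (hslope : ∀ x : ℝ, a x ≥
      (⇑a.symm)^[n]
        ((fun y => w (a y))^[m]
          ((⇑w)^[n]
            ((fun y => a (w y))^[m - 1]
              (a ((⇑w)^[n]
                ((fun y => a (w y))^[m]
                  ((⇑a.symm)^[n + 3 * m] x)))))))) :
    ∀ x : ℝ, w x < a x := by
  by_contra hcon
  push_neg at hcon
  obtain ⟨x₀, hx₀⟩ := hcon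
  obtain ⟨m', rfl⟩ : ∃ m', m = m' + 1 := ⟨m - 1, by omega⟩
  have hm1 : m' + 1 - 1 = m' := by omega
  set AW : ℝ → ℝ := fun y => a (w y) with hAW
  set WA : ℝ → ℝ := fun y => w (a y) with hWA
  have maw : Monotone AW := a.monotone.comp w.monotone
  have mwa : Monotone WA := w.monotone.comp a.monotone
  set u : ℝ := (⇑a.symm)^[n] x₀ with hu
  have hau : (⇑a)^[n] u = x₀ := Function.LeftInverse.iterate a.apply_symm_apply n x₀
  -- the middle word
  set Wu : ℝ := WA^[m' + 1] ((⇑w)^[n] (AW^[m'] (a ((⇑w)^[n] (AW^[m' + 1] u))))) with hWu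
  -- upper bound from the slope hypothesis
  have hW : Wu ≤ (⇑a)^[n] (a ((⇑a)^[n + 3 * (m' + 1)] u)) := by
    have h0 := hslope ((⇑a)^[n + 3 * (m' + 1)] u)
    rw [Function.LeftInverse.iterate a.symm_apply_apply (n + 3 * (m' + 1)) u, hm1] at h0
    have h0' := (a.monotone.iterate n) h0
    rwa [Function.LeftInverse.iterate a.apply_symm_apply n] at h0'
  -- lower bound via h1 (k = n)
  have step1 : AW^[m' + 1] x₀ ≤ (⇑w)^[n] (AW^[m' + 1] u) := by
    have := (h1 n hn u).le
    rwa [hau] at this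
  set v : ℝ := AW^[m'] (a (AW^[m' + 1] x₀)) with hv
  have hvW : WA^[m' + 1] ((⇑w)^[n] v) ≤ Wu :=
    (mwa.iterate (m' + 1)) ((w.monotone.iterate n) ((maw.iterate m') (a.monotone step1)))
  -- strict step via h2 (k = n)
  have hstrict : (⇑a)^[n] (WA^[m' + 1] v) < Wu := lt_of_lt_of_le (h2 n hn v) hvW
  -- lower bound the strict term by a pure power of a
  have b1 : (⇑a)^[m'] (a (a x₀)) ≤ AW^[m' + 1] x₀ := by
    calc (⇑a)^[m'] (a (a x₀)) ≤ (⇑a)^[m'] (AW x₀) := (a.monotone.iterate m') (a.monotone hx₀)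
      _ ≤ AW^[m'] (AW x₀) := aux_aw a w hw m' (AW x₀)
      _ = AW^[m' + 1] x₀ := (Function.iterate_succ_apply AW m' x₀).symm
  have b3 : (⇑a)^[m'] (a ((⇑a)^[m'] (a (a x₀)))) ≤ v := by
    calc (⇑a)^[m'] (a ((⇑a)^[m'] (a (a x₀))))
        ≤ (⇑a)^[m'] (a (AW^[m' + 1] x₀)) := (a.monotone.iterate m') (a.monotone b1)
      _ ≤ v := aux_aw a w hw m' _
  have b5 : (⇑a)^[n] ((⇑a)^[m' + 1] ((⇑a)^[m'] (a ((⇑a)^[m'] (a (a x₀))))))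
      ≤ (⇑a)^[n] (WA^[m' + 1] v) := by
    refine (a.monotone.iterate n) ?_
    calc (⇑a)^[m' + 1] ((⇑a)^[m'] (a ((⇑a)^[m'] (a (a x₀)))))
        ≤ (⇑a)^[m' + 1] v := (a.monotone.iterate (m' + 1)) b3
      _ ≤ WA^[m' + 1] v := aux_wa a w hw (m' + 1) v
  -- both extreme terms are the same pure power of a applied to x₀
  have keyeq : (⇑a)^[n] (a ((⇑a)^[n + 3 * (m' + 1)] u))
      = (⇑a)^[n] ((⇑a)^[m' + 1] ((⇑a)^[m'] (a ((⇑a)^[m'] (a (a x₀)))))) := by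
    have h3m : (⇑a)^[n + 3 * (m' + 1)] u = (⇑a)^[3 * (m' + 1)] x₀ := by
      rw [add_comm, Function.iterate_add_apply, hau]
    rw [h3m]
    simp only [← Function.iterate_succ_apply', ← Function.iterate_add_apply]
    rw [show a (a x₀) = (⇑a)^[2] x₀ from rfl, ← Function.iterate_add_apply]
    exact congrFun (congrArg (fun k => (⇑a)^[k]) (by omega)) x₀
  exact absurd (lt_of_le_of_lt (keyeq ▸ b5) (lt_of_lt_of_le hstrict hW)) (lt_irrefl _)
end
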